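/- With the setup of empirical and population gradient descent, for any t ≥ 0: ‖w^S_{t+1} − w^D_{t+1}‖² ≤ (1 + 1/(t+1))·‖w^S_t − w^D_t‖² + η²(t+1)·‖∇F_S(w^D_t) − ∇F_D(w^D_t)‖² + 4η²L². -/

import Mathlib

/-!
Expand `‖a - η (p + q)‖²` with `a = w^S - w^D`, `p = ∇F_S(w^S) - ∇F_S(w^D)` and
`q = ∇F_S(w^D) - ∇F_D(w^D)`. Convexity makes `∇F_S` monotone, so `-2η⟪a, p⟫ ≤ 0`;
Cauchy–Schwarz and `2xy ≤ x²/c + c y²` with `c = t + 1` bound `-2η⟪a, q⟫`; and the Lipschitz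
bounds on `F_S`, `F_D` give `‖p + q‖ ≤ 2L`.
-/

open scoped RealInnerProductSpace Gradient

section FirstOrder

variable {E : Type*} [NormedAddCommGroup E] [NormedSpace ℝ E] {f : E → ℝ} {x : E}

theorem ConvexOn.fderiv_sub_le (hf : ConvexOn ℝ Set.univ f) (hx : DifferentiableAt ℝ f x)
    (y : E) : fderiv ℝ f x (y - x) ≤ f y - f x := by
  let γ : ℝ →ᵃ[ℝ] E := AffineMap.lineMap x y
  have hline : ConvexOn ℝ Set.univ (f ∘ γ) := hf.comp_affineMap γ
  have hderiv : HasDerivAt (f ∘ γ) (fderiv ℝ f x (y - x)) 0 :=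
    hx.hasFDerivAt.comp_hasDerivAt_of_eq 0 AffineMap.hasDerivAt_lineMap (by simp [γ])
  simpa [slope, γ] using
    hline.le_slope_of_hasDerivAt (Set.mem_univ 0) (Set.mem_univ 1) one_pos hderiv

end FirstOrder

section Gradient

variable {F : Type*} [NormedAddCommGroup F] [InnerProductSpace ℝ F] [CompleteSpace F]
  {f g : F → ℝ}

theorem ConvexOn.inner_gradient_sub_le (hf : ConvexOn ℝ Set.univ f) {x : F}
    (hx : DifferentiableAt ℝ f x) (y : F) : ⟪∇ f x, y - x⟫ ≤ f y - f x := by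
  simpa [inner_gradient_left] using hf.fderiv_sub_le hx y

theorem ConvexOn.inner_gradient_sub_gradient_nonneg (hf : ConvexOn ℝ Set.univ f) {x y : F}
    (hx : DifferentiableAt ℝ f x) (hy : DifferentiableAt ℝ f y) :
    0 ≤ ⟪∇ f x - ∇ f y, x - y⟫ := by
  have hxy := hf.inner_gradient_sub_le hx y
  have hyx := hf.inner_gradient_sub_le hy x
  rw [← neg_sub x y, inner_neg_right] at hxy
  rw [inner_sub_left]
  linarith

theorem LipschitzWith.norm_gradient_le {K : NNReal} (hf : LipschitzWith K f) (x : F) :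
    ‖∇ f x‖ ≤ K := by
  rw [gradient, LinearIsometryEquiv.norm_map]
  exact norm_fderiv_le_of_lipschitz ℝ hf

theorem norm_gradient_sub_gradient_sq_le {L : ℝ} (hf : LipschitzWith L.toNNReal f)
    (hg : LipschitzWith L.toNNReal g) (x y : F) : ‖∇ f x - ∇ g y‖ ^ 2 ≤ 4 * L ^ 2 := by
  have hsum : ‖∇ f x - ∇ g y‖ ≤ 2 * max L 0 := by
    calc ‖∇ f x - ∇ g y‖ ≤ ‖∇ f x‖ + ‖∇ g y‖ := norm_sub_le _ _
      _ ≤ L.toNNReal + L.toNNReal := add_le_add (hf.norm_gradient_le x) (hg.norm_gradient_le y)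
      _ = 2 * max L 0 := by rw [Real.coe_toNNReal']; ring
  have hmax : max L 0 ^ 2 ≤ L ^ 2 := by
    rcases le_total L 0 with h | h <;> simp [h, sq_nonneg]
  nlinarith [norm_nonneg (∇ f x - ∇ g y)]

end Gradient

section OneStep

variable {E : Type*} [NormedAddCommGroup E] [InnerProductSpace ℝ E]

theorem neg_two_mul_inner_le {c : ℝ} (hc : 0 < c) (x y : E) :
    -(2 * ⟪x, y⟫) ≤ ‖x‖ ^ 2 / c + c * ‖y‖ ^ 2 := by
  have hcs : -⟪x, y⟫ ≤ ‖x‖ * ‖y‖ := by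
    simpa [inner_neg_right] using real_inner_le_norm x (-y)
  rw [div_add' _ _ _ hc.ne', le_div_iff₀ hc]
  nlinarith [sq_nonneg (‖x‖ - c * ‖y‖)]

theorem norm_sub_smul_add_sq_le {a p q : E} {η c : ℝ} (hη : 0 ≤ η) (hc : 0 < c)
    (hp : 0 ≤ ⟪a, p⟫) :
    ‖a - η • (p + q)‖ ^ 2
      ≤ (1 + 1 / c) * ‖a‖ ^ 2 + η ^ 2 * c * ‖q‖ ^ 2 + η ^ 2 * ‖p + q‖ ^ 2 := by
  have hq := neg_two_mul_inner_le hc a (η • q)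
  rw [norm_smul, real_inner_smul_right, Real.norm_eq_abs, mul_pow, sq_abs] at hq
  rw [norm_sub_sq_real, norm_smul, real_inner_smul_right, inner_add_right, Real.norm_eq_abs,
    mul_pow, sq_abs]
  have hpη : 0 ≤ η * ⟪a, p⟫ := mul_nonneg hη hp
  have hdiv : 1 / c * ‖a‖ ^ 2 = ‖a‖ ^ 2 / c := by ring
  nlinarith

end OneStep

theorem stmt_8_general (d : ℕ) (FS FD : EuclideanSpace ℝ (Fin d) → ℝ) (η L : ℝ) (t : ℕ)
    (hη : 0 ≤ η)
    (hconvS : ConvexOn ℝ Set.univ FS)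
    (hdiffS : Differentiable ℝ FS)
    (hlipS : LipschitzWith L.toNNReal FS) (hlipD : LipschitzWith L.toNNReal FD)
    (wS wD : EuclideanSpace ℝ (Fin d)) :
    ‖(wS - η • gradient FS wS) - (wD - η • gradient FD wD)‖ ^ 2
      ≤ (1 + 1 / ((t : ℝ) + 1)) * ‖wS - wD‖ ^ 2
        + η ^ 2 * ((t : ℝ) + 1) * ‖gradient FS wD - gradient FD wD‖ ^ 2
        + 4 * η ^ 2 * L ^ 2 := by
  have hsplit : (wS - η • ∇ FS wS) - (wD - η • ∇ FD wD)
      = (wS - wD) - η • ((∇ FS wS - ∇ FS wD) + (∇ FS wD - ∇ FD wD)) := by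
    module
  have hmono : 0 ≤ ⟪wS - wD, ∇ FS wS - ∇ FS wD⟫ := by
    rw [real_inner_comm]
    exact hconvS.inner_gradient_sub_gradient_nonneg (hdiffS wS) (hdiffS wD)
  have hdrift :
      η ^ 2 * ‖(∇ FS wS - ∇ FS wD) + (∇ FS wD - ∇ FD wD)‖ ^ 2 ≤ 4 * η ^ 2 * L ^ 2 := by
    rw [sub_add_sub_cancel, mul_comm 4, mul_assoc]
    exact mul_le_mul_of_nonneg_left (norm_gradient_sub_gradient_sq_le hlipS hlipD wS wD)
      (sq_nonneg η)
  rw [hsplit]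
  have hstep := norm_sub_smul_add_sq_le (q := ∇ FS wD - ∇ FD wD) (c := t + 1) hη
    (by positivity) hmono
  linarith

theorem stmt_8 (d : ℕ) (FS FD : EuclideanSpace ℝ (Fin d) → ℝ) (η L : ℝ) (t : ℕ)
    (hη : 0 ≤ η) (hL : 0 ≤ L)
    (hconvS : ConvexOn ℝ Set.univ FS) (hconvD : ConvexOn ℝ Set.univ FD)
    (hdiffS : Differentiable ℝ FS) (hdiffD : Differentiable ℝ FD)
    (hlipS : LipschitzWith L.toNNReal FS) (hlipD : LipschitzWith L.toNNReal FD)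
    (wS wD : EuclideanSpace ℝ (Fin d)) :
    ‖(wS - η • gradient FS wS) - (wD - η • gradient FD wD)‖ ^ 2
      ≤ (1 + 1 / ((t : ℝ) + 1)) * ‖wS - wD‖ ^ 2
        + η ^ 2 * ((t : ℝ) + 1) * ‖gradient FS wD - gradient FD wD‖ ^ 2
        + 4 * η ^ 2 * L ^ 2 :=
  stmt_8_general d FS FD η L t hη hconvS hdiffS hlipS hlipD wS wD
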